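/- arXiv:2108.03100 — 8 statements merged into one kernel-verified Lean document; each statement's English description precedes it below -/
import Mathlib

section
/- Transitivity of the local preference on sets of clashing assumptions (lemma in the appendix 'Proofs for Overall Weight Queries'): for all subsets X, Y, Z of D, if X > Y and Y > Z, then X > Z. -/
/-- Local preference on sets of clashing assumptions: `X > Y` iff every
`d ∈ X \ Y` is compensated by some `d' ∈ Y \ X` whose context is strictly
below (more general than) that of `d`. -/
def LocPrefSet {C D : Type*} (prec : C → C → Prop) (r : D → C) (X Y : Set D) : Prop :=
  ∀ d ∈ X \ Y, ∃ d' ∈ Y \ X, prec (r d') (r d)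

/-- Transitivity of the local preference on sets of clashing assumptions. -/
theorem locPrefSet_trans {C D : Type*} [Finite C]
    (prec : C → C → Prop) (htrans : Transitive prec) (hirr : Irreflexive prec)
    (r : D → C) (X Y Z : Set D)
    (hXY : LocPrefSet prec r X Y) (hYZ : LocPrefSet prec r Y Z) :
    LocPrefSet prec r X Z := by
  have wf : WellFounded prec :=
    @Finite.wellFounded_of_trans_of_irrefl C _ prec ⟨htrans⟩ ⟨hirr⟩
  -- Key lemma: every d ∈ Y \ Z is compensated by some e ∈ Z \ X with r e ≺ r d.
  have key : ∀ c : C, ∀ d : D, r d = c → d ∈ Y \ Z →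
      ∃ e ∈ Z \ X, prec (r e) (r d) := by
    intro c
    induction c using wf.induction with
    | _ c ih =>
      intro d hd hdYZ
      obtain ⟨e, heZY, hprec⟩ := hYZ d hdYZ
      by_cases heX : e ∈ X
      · -- e ∈ X \ Y
        obtain ⟨g, hgYX, hprec2⟩ := hXY e ⟨heX, heZY.2⟩
        have hgd : prec (r g) (r d) := htrans hprec2 hprec
        by_cases hgZ : g ∈ Z
        · exact ⟨g, ⟨hgZ, hgYX.2⟩, hgd⟩
        · obtain ⟨e', he', hprec3⟩ := ih (r g) (hd ▸ hgd) g rfl ⟨hgYX.1, hgZ⟩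
          exact ⟨e', he', htrans hprec3 hgd⟩
      · exact ⟨e, ⟨heZY.1, heX⟩, hprec⟩
  intro d hdXZ
  by_cases hdY : d ∈ Y
  · exact key (r d) d rfl ⟨hdY, hdXZ.2⟩
  · obtain ⟨g, hgYX, hprec⟩ := hXY d ⟨hdXZ.1, hdY⟩
    by_cases hgZ : g ∈ Z
    · exact ⟨g, ⟨hgZ, hgYX.2⟩, hprec⟩
    · obtain ⟨e, he, hprec2⟩ := key (r g) g rfl ⟨hgYX.1, hgZ⟩
      exact ⟨e, he, htrans hprec2 hprec⟩
end

section
/- Transitivity of the multiset generalization of the local preference (used to define the semiring R_one): for all multisets X, Y, Z over D, if X > Y and Y > Z, then X > Z. -/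
/-- Multiset generalization of the local preference: `X > Y` iff for every
clashing assumption `d` whose multiplicity in `X` exceeds its multiplicity in
`Y` there is a `d'` whose multiplicity in `Y` exceeds its multiplicity in `X`
and whose context is strictly below that of `d`. -/
def LocPrefMul {C D : Type*} [DecidableEq D] (prec : C → C → Prop) (r : D → C)
    (X Y : Multiset D) : Prop :=
  ∀ d : D, Y.count d < X.count d →
    ∃ d' : D, X.count d' < Y.count d' ∧ prec (r d') (r d)

/-- Transitivity of the multiset generalization of the local preference. -/
theorem locPrefMul_trans {C D : Type*} [Finite C] [DecidableEq D]
    (prec : C → C → Prop) (htrans : Transitive prec) (hirr : Irreflexive prec)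
    (r : D → C) (X Y Z : Multiset D)
    (hXY : LocPrefMul prec r X Y) (hYZ : LocPrefMul prec r Y Z) :
    LocPrefMul prec r X Z := by
  have _ : IsTrans C prec := ⟨htrans⟩
  have _ : IsIrrefl C prec := ⟨hirr⟩
  have hwf : WellFounded prec := Finite.wellFounded_of_trans_of_irrefl prec
  have key : ∀ c : C, ∀ d : D, r d = c →
      (Y.count d < X.count d ∨ Z.count d < Y.count d) →
      ∃ d', X.count d' < Z.count d' ∧ prec (r d') (r d) := by
    intro c
    induction c using hwf.induction with
    | _ c IH =>
      rintro d rfl (hA | hB)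
      · obtain ⟨d₁, h1, hp1⟩ := hXY d hA
        by_cases h : X.count d₁ < Z.count d₁
        · exact ⟨d₁, h, hp1⟩
        · obtain ⟨d', hd', hp'⟩ :=
            IH (r d₁) hp1 d₁ rfl (Or.inr (lt_of_le_of_lt (not_lt.1 h) h1))
          exact ⟨d', hd', htrans hp' hp1⟩
      · obtain ⟨d₂, h2, hp2⟩ := hYZ d hB
        by_cases h : X.count d₂ < Z.count d₂
        · exact ⟨d₂, h, hp2⟩
        · obtain ⟨d', hd', hp'⟩ :=
            IH (r d₂) hp2 d₂ rfl (Or.inl (lt_of_lt_of_le h2 (not_lt.1 h)))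
          exact ⟨d', hd', htrans hp' hp2⟩
  intro d hd
  rcases lt_or_ge (Y.count d) (X.count d) with h | h
  · exact key (r d) d rfl (Or.inl h)
  · exact key (r d) d rfl (Or.inr (lt_of_lt_of_le hd h))
end

section
/- Abstract core of the pareto-equivalence theorem (Theorem 'pareto_equiv'): over the full dependent product Π c, T c (which is closed under replacing any single component, corresponding to eval-disconnectedness of the sCKR), an element x is P1-maximal if and only if it is P2-maximal. -/
/-- The strict part of a binary relation. -/
def SPart {A : Type*} (gt : A → A → Prop) (a b : A) : Prop :=
  gt a b ∧ ¬ gt b a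

/-- Single-witness preference: `x` is better than `y` at some context `c`
(w.r.t. the strict part) and `y` is not strictly better than `x` at any other
context. -/
def P1 {C : Type*} {T : C → Type*} (gt : ∀ c, T c → T c → Prop)
    (x y : ∀ c, T c) : Prop :=
  ∃ c, SPart (gt c) (x c) (y c) ∧ ∀ c', c' ≠ c → ¬ SPart (gt c') (y c') (x c')

/-- Componentwise-dominance (pareto) preference: `x` is strictly better than
`y` at some context and at least as good (better or equal) at every context. -/
def P2 {C : Type*} {T : C → Type*} (gt : ∀ c, T c → T c → Prop)
    (x y : ∀ c, T c) : Prop :=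
  (∃ c, SPart (gt c) (x c) (y c)) ∧ ∀ c', gt c' (x c') (y c') ∨ x c' = y c'

/-- `x` is maximal w.r.t. a preference relation `P` iff no `y` is preferred to `x`. -/
def PMax {C : Type*} {T : C → Type*} (P : (∀ c, T c) → (∀ c, T c) → Prop)
    (x : ∀ c, T c) : Prop :=
  ¬ ∃ y, P y x

/-- Abstract core of the pareto-equivalence theorem: over the full dependent
product, an element is P1-maximal iff it is P2-maximal. -/
theorem P1_max_iff_P2_max {C : Type*} {T : C → Type*}
    (gt : ∀ c, T c → T c → Prop) (x : ∀ c, T c) :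
    PMax (P1 gt) x ↔ PMax (P2 gt) x := by
  classical
  constructor
  · rintro h ⟨y, ⟨c, hc⟩, hall⟩
    exact h ⟨y, c, hc, fun c' _ hsp => by
      rcases hall c' with hg | he
      · exact hsp.2 hg
      · rw [he] at hsp; exact hsp.2 hsp.1⟩
  · rintro h ⟨y, c, hc, _⟩
    refine h ⟨Function.update x c (y c), ⟨c, ?_⟩, fun c' => ?_⟩
    · simpa using hc
    · by_cases hcc : c' = c
      · subst hcc; left; simpa using hc.1
      · right; simp [Function.update_of_ne hcc]
end

section
/- Componentwise characterization of P1-maximality (combining Theorem 'pareto_equiv' with Lemma 'local_opt'): an element x of the full dependent product Π c, T c is P1-maximal if and only if for every c ∈ C there is no a : T c with S_c a (x c). -/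
/-- Componentwise characterization of P1-maximality over the full dependent
product: `x` is P1-maximal iff at no context some value is strictly better
than the component of `x` there. -/
theorem P1_max_iff_local {C : Type*} {T : C → Type*}
    (gt : ∀ c, T c → T c → Prop) (x : ∀ c, T c) :
    PMax (P1 gt) x ↔ ∀ c, ¬ ∃ a : T c, SPart (gt c) a (x c) := by
  classical
  constructor
  · intro hmax c ⟨a, ha⟩
    apply hmax
    refine ⟨Function.update x c a, c, ?_, ?_⟩
    · simpa using ha
    · intro c' hc'
      rw [Function.update_of_ne hc']
      exact fun h => h.2 h.1
  · rintro h ⟨y, c, hsp, -⟩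
    exact h c ⟨y c, hsp⟩
end

section
/- Distributivity of the 'preferred-or-lexicographically-minimal' addition over the monoid operation (the distributivity case analysis in the proof that R_one is a semiring): under the stated invariance hypotheses, for all a, b, c ∈ M one has a + (b ⊕ c) = (a + b) ⊕ (a + c). -/
/-- The strict part of a binary relation. -/
def StrictPart {M : Type*} (R : M → M → Prop) (x y : M) : Prop :=
  R x y ∧ ¬ R y x

open Classical in
/-- The "preferred-or-lexicographically-minimal" addition: return the strictly
preferred element, and the `≤`-minimum in case of a tie. -/
noncomputable def oplus {M : Type*} [LinearOrder M] (R : M → M → Prop) (x y : M) : M :=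
  if StrictPart R x y then x else if StrictPart R y x then y else min x y

/-- Distributivity of the "preferred-or-lexicographically-minimal" addition
over the monoid operation: if the preference relation `R` and the linear
order `≤` are both invariant under translation, then
`a + (b ⊕ c) = (a + b) ⊕ (a + c)`. -/
theorem add_oplus_distrib {M : Type*} [AddCommMonoid M] [LinearOrder M]
    (R : M → M → Prop)
    (hR : ∀ a b c : M, R b c ↔ R (a + b) (a + c))
    (hle : ∀ a b c : M, a + b ≤ a + c ↔ b ≤ c) :
    ∀ a b c : M, a + oplus R b c = oplus R (a + b) (a + c) := by
  intro a b c
  have hS : StrictPart R b c ↔ StrictPart R (a + b) (a + c) := by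
    unfold StrictPart; rw [← hR a b c, ← hR a c b]
  have hS' : StrictPart R c b ↔ StrictPart R (a + c) (a + b) := by
    unfold StrictPart; rw [← hR a b c, ← hR a c b]
  unfold oplus
  by_cases h1 : StrictPart R b c
  · rw [if_pos h1, if_pos (hS.mp h1)]
  · rw [if_neg h1, if_neg (fun h => h1 (hS.mpr h))]
    by_cases h2 : StrictPart R c b
    · rw [if_pos h2, if_pos (hS'.mp h2)]
    · rw [if_neg h2, if_neg (fun h => h2 (hS'.mpr h))]
      rcases le_total b c with h | h
      · rw [min_eq_left h, min_eq_left ((hle a b c).mpr h)]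
      · rw [min_eq_right h, min_eq_right ((hle a c b).mpr h)]
end

section
/- Absorption law for the selection of maximal elements (the content of associativity of addition in the semiring R_all of the overall-weight theorem): for all finite subsets A, B of M, opt(opt(A) ∪ B) = opt(A ∪ B). -/
open Classical in
private lemma opt_aux {M : Type*} [DecidableEq M]
    (prec : M → M → Prop) (htrans : Transitive prec) (hirr : Irreflexive prec) :
    ∀ (n : ℕ) (X : Finset M) (x : M), (X.filter (fun y => prec x y)).card ≤ n →
      x ∈ X → ∃ y ∈ X, (x = y ∨ prec x y) ∧ ∀ z ∈ X, ¬ prec y z := by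
  intro n
  induction n with
  | zero =>
    intro X x hc hx
    refine ⟨x, hx, Or.inl rfl, fun z hz hpz => ?_⟩
    have : z ∈ X.filter (fun y => prec x y) := Finset.mem_filter.2 ⟨hz, hpz⟩
    simp [Finset.card_eq_zero.1 (Nat.le_zero.1 hc)] at this
  | succ n ih =>
    intro X x hc hx
    by_cases hmax : ∀ z ∈ X, ¬ prec x z
    · exact ⟨x, hx, Or.inl rfl, hmax⟩
    · push_neg at hmax
      obtain ⟨y, hy, hxy⟩ := hmax
      have hsub : X.filter (fun z => prec y z) ⊂ X.filter (fun z => prec x z) := by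
        constructor
        · intro z hz
          rw [Finset.mem_filter] at hz ⊢
          exact ⟨hz.1, htrans hxy hz.2⟩
        · intro hs
          have : y ∈ X.filter (fun z => prec y z) :=
            hs (Finset.mem_filter.2 ⟨hy, hxy⟩)
          exact hirr y (Finset.mem_filter.1 this).2
      have hcard : (X.filter (fun z => prec y z)).card ≤ n :=
        Nat.lt_succ_iff.1 (lt_of_lt_of_le (Finset.card_lt_card hsub) hc)
      obtain ⟨w, hw, hyw, hwmax⟩ := ih X y hcard hy
      refine ⟨w, hw, Or.inr ?_, hwmax⟩
      rcases hyw with rfl | h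
      · exact hxy
      · exact htrans hxy h

/-- Absorption law for the selection of `≺`-maximal elements of finite sets:
`opt (opt A ∪ B) = opt (A ∪ B)`, where `opt X` is the set of `≺`-maximal
elements of `X` and `≺` is transitive and irreflexive. -/
theorem opt_union_absorb {M : Type*} [DecidableEq M]
    (prec : M → M → Prop) (htrans : Transitive prec) (hirr : Irreflexive prec)
    (opt : Finset M → Finset M)
    (hopt : ∀ (X : Finset M) (x : M), x ∈ opt X ↔ x ∈ X ∧ ∀ y ∈ X, ¬ prec x y)
    (A B : Finset M) :
    opt (opt A ∪ B) = opt (A ∪ B) := by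
  classical
  have haux := opt_aux prec htrans hirr
  ext x
  rw [hopt, hopt]
  simp only [Finset.mem_union]
  constructor
  · rintro ⟨hx, hmax⟩
    have hxAB : x ∈ A ∨ x ∈ B := by
      rcases hx with h | h
      · exact Or.inl ((hopt A x).1 h).1
      · exact Or.inr h
    refine ⟨hxAB, fun y hy hxy => ?_⟩
    rcases hy with hyA | hyB
    · obtain ⟨w, hw, hyw, hwmax⟩ := haux _ A y le_rfl hyA
      have hwopt : w ∈ opt A := (hopt A w).2 ⟨hw, hwmax⟩
      have : prec x w := by
        rcases hyw with rfl | h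
        · exact hxy
        · exact htrans hxy h
      exact hmax w (Or.inl hwopt) this
    · exact hmax y (Or.inr hyB) hxy
  · rintro ⟨hx, hmax⟩
    have hmax' : ∀ y, (y ∈ opt A ∨ y ∈ B) → ¬ prec x y := by
      rintro y (h | h) hxy
      · exact hmax y (Or.inl ((hopt A y).1 h).1) hxy
      · exact hmax y (Or.inr h) hxy
    rcases hx with hA | hB
    · have : x ∈ opt A := (hopt A x).2 ⟨hA, fun y hy => hmax y (Or.inl hy)⟩
      exact ⟨Or.inl this, hmax'⟩
    · exact ⟨Or.inr hB, hmax'⟩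
end

section
/- Compatibility of the selection of maximal elements with setwise sums (the content of associativity of multiplication and of distributivity in the semiring R_all of the overall-weight theorem): if ≺ is translation-invariant, then for all finite subsets A, B of M, opt(A + opt(B)) = opt(A + B). -/
open Pointwise

/-- In a finite set, above any element there is a maximal one. -/
lemma exists_opt_ge {M : Type*} [DecidableEq M]
    (prec : M → M → Prop) (htrans : Transitive prec) (hirr : Irreflexive prec)
    (opt : Finset M → Finset M)
    (hopt : ∀ (X : Finset M) (x : M), x ∈ opt X ↔ x ∈ X ∧ ∀ y ∈ X, ¬ prec x y)
    (X : Finset M) (x : M) (hx : x ∈ X) :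
    ∃ y ∈ opt X, y = x ∨ prec x y := by
  classical
  have key : ∀ n (x : M), (X.filter (fun y => prec x y)).card ≤ n → x ∈ X →
      ∃ y ∈ opt X, y = x ∨ prec x y := by
    intro n
    induction n with
    | zero =>
      intro x hcard hx
      refine ⟨x, ?_, Or.inl rfl⟩
      rw [hopt]
      refine ⟨hx, fun y hy hxy => ?_⟩
      have : y ∈ X.filter (fun y => prec x y) := Finset.mem_filter.2 ⟨hy, hxy⟩
      have := Finset.card_pos.2 ⟨y, this⟩
      omega
    | succ n ih =>
      intro x hcard hx
      by_cases hmax : ∀ y ∈ X, ¬ prec x y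
      · exact ⟨x, (hopt X x).2 ⟨hx, hmax⟩, Or.inl rfl⟩
      · push_neg at hmax
        obtain ⟨z, hz, hxz⟩ := hmax
        have hsub : X.filter (fun y => prec z y) ⊆ X.filter (fun y => prec x y) := by
          intro y hy
          rw [Finset.mem_filter] at hy ⊢
          exact ⟨hy.1, htrans hxz hy.2⟩
        have hzmem : z ∈ X.filter (fun y => prec x y) := Finset.mem_filter.2 ⟨hz, hxz⟩
        have hznot : z ∉ X.filter (fun y => prec z y) := by
          rw [Finset.mem_filter]
          exact fun h => hirr z h.2
        have hlt : (X.filter (fun y => prec z y)).card < (X.filter (fun y => prec x y)).card :=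
          Finset.card_lt_card ⟨hsub, fun h => hznot (h hzmem)⟩
        obtain ⟨y, hy, hy2⟩ := ih z (by omega) hz
        refine ⟨y, hy, Or.inr ?_⟩
        rcases hy2 with rfl | h
        · exact hxz
        · exact htrans hxz h
  exact key _ x le_rfl hx

/-- Compatibility of the selection of `≺`-maximal elements with setwise sums:
if `≺` is transitive, irreflexive and translation-invariant, then
`opt (A + opt B) = opt (A + B)`, where `A + B` is the setwise (pointwise) sum
of finite subsets of the additive commutative monoid `M`. -/
theorem opt_add_absorb {M : Type*} [AddCommMonoid M] [DecidableEq M]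
    (prec : M → M → Prop) (htrans : Transitive prec) (hirr : Irreflexive prec)
    (hinv : ∀ a b c : M, prec b c → prec (a + b) (a + c))
    (opt : Finset M → Finset M)
    (hopt : ∀ (X : Finset M) (x : M), x ∈ opt X ↔ x ∈ X ∧ ∀ y ∈ X, ¬ prec x y)
    (A B : Finset M) :
    opt (A + opt B) = opt (A + B) := by
  have hoptsub : ∀ X : Finset M, opt X ⊆ X := fun X x hx => ((hopt X x).1 hx).1
  have hsub : A + opt B ⊆ A + B := by
    intro x hx
    rw [Finset.mem_add] at hx ⊢
    obtain ⟨a, ha, b, hb, rfl⟩ := hx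
    exact ⟨a, ha, b, hoptsub B hb, rfl⟩
  ext x
  rw [hopt, hopt]
  constructor
  · rintro ⟨hx, hmax⟩
    refine ⟨hsub hx, fun y hy hprec => ?_⟩
    rw [Finset.mem_add] at hy
    obtain ⟨a₂, ha₂, b₂, hb₂, rfl⟩ := hy
    obtain ⟨b₂', hb₂', hcase⟩ := exists_opt_ge prec htrans hirr opt hopt B b₂ hb₂
    have hmem : a₂ + b₂' ∈ A + opt B := Finset.add_mem_add ha₂ hb₂'
    rcases hcase with rfl | h
    · exact hmax _ hmem hprec
    · exact hmax _ hmem (htrans hprec (hinv a₂ b₂ b₂' h))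
  · rintro ⟨hx, hmax⟩
    rw [Finset.mem_add] at hx
    obtain ⟨a, ha, b, hb, rfl⟩ := hx
    obtain ⟨b', hb', hcase⟩ := exists_opt_ge prec htrans hirr opt hopt B b hb
    rcases hcase with rfl | h
    · exact ⟨Finset.add_mem_add ha hb', fun y hy hprec => hmax y (hsub hy) hprec⟩

    · exact absurd (hinv a b b' h)
        (hmax _ (Finset.add_mem_add ha (hoptsub B hb')))
end

section
/- Antichain semiring (the abstract semiring structure underlying the paper's theorem that R_all(K) is a semiring): the collection of finite antichains of M, i.e., finite subsets A with opt(A) = A, equipped with addition A ⊕ B := opt(A ∪ B), multiplication A ⊗ B := opt(A + B), zero ∅, and one {0}, forms a commutative semiring: ⊕ and ⊗ are associative and commutative and map finite antichains to finite antichains, ∅ is the identity for ⊕ and absorbing for ⊗, {0} is the identity for ⊗, and ⊗ distributes over ⊕. -/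
open Pointwise

open Classical in
/-- The set of `≺`-maximal elements of a finite set. -/
noncomputable def optF {M : Type*} (prec : M → M → Prop) (X : Finset M) : Finset M :=
  X.filter (fun x => ∀ y ∈ X, ¬ prec x y)

/-- An antichain: a finite set all of whose elements are `≺`-maximal in it. -/
def IsAC {M : Type*} (prec : M → M → Prop) (A : Finset M) : Prop :=
  optF prec A = A

/-- Addition of antichains: maximal elements of the union. -/
noncomputable def acAdd {M : Type*} [DecidableEq M] (prec : M → M → Prop)
    (A B : Finset M) : Finset M :=
  optF prec (A ∪ B)

/-- Multiplication of antichains: maximal elements of the setwise sum. -/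
noncomputable def acMul {M : Type*} [AddCommMonoid M] [DecidableEq M]
    (prec : M → M → Prop) (A B : Finset M) : Finset M :=
  optF prec (A + B)

open Classical in
lemma mem_optF {M : Type*} {prec : M → M → Prop} {X : Finset M} {x : M} :
    x ∈ optF prec X ↔ x ∈ X ∧ ∀ y ∈ X, ¬ prec x y := by
  simp [optF]

lemma optF_subset {M : Type*} (prec : M → M → Prop) (X : Finset M) :
    optF prec X ⊆ X := fun x hx => (mem_optF.1 hx).1

lemma optF_idem {M : Type*} (prec : M → M → Prop) (X : Finset M) :
    optF prec (optF prec X) = optF prec X := by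
  apply Finset.Subset.antisymm (optF_subset _ _)
  intro x hx
  obtain ⟨hxX, hmax⟩ := mem_optF.1 hx
  exact mem_optF.2 ⟨hx, fun y hy => hmax y (optF_subset _ _ hy)⟩

lemma exists_opt {M : Type*} {prec : M → M → Prop} (htrans : Transitive prec)
    (hirr : Irreflexive prec)
    (X : Finset M) : ∀ x ∈ X, ∃ m ∈ optF prec X, m = x ∨ prec x m := by
  classical
  have key : ∀ n (x : M), x ∈ X → (X.filter (fun y => prec x y)).card ≤ n →
      ∃ m ∈ optF prec X, m = x ∨ prec x m := by
    intro n
    induction n with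
    | zero =>
      intro x hx hc
      refine ⟨x, mem_optF.2 ⟨hx, fun y hy hp => ?_⟩, Or.inl rfl⟩
      have : y ∈ X.filter (fun y => prec x y) := Finset.mem_filter.2 ⟨hy, hp⟩
      simp [Finset.card_eq_zero.1 (Nat.le_zero.1 hc)] at this
    | succ n ih =>
      intro x hx hc
      by_cases h : ∀ y ∈ X, ¬ prec x y
      · exact ⟨x, mem_optF.2 ⟨hx, h⟩, Or.inl rfl⟩
      · push_neg at h
        obtain ⟨y, hyX, hxy⟩ := h
        have hsub : X.filter (fun z => prec y z) ⊂ X.filter (fun z => prec x z) := by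
          constructor
          · intro z hz
            obtain ⟨hzX, hyz⟩ := Finset.mem_filter.1 hz
            exact Finset.mem_filter.2 ⟨hzX, htrans hxy hyz⟩
          · intro hcon
            have : y ∈ X.filter (fun z => prec y z) :=
              hcon (Finset.mem_filter.2 ⟨hyX, hxy⟩)
            exact hirr y (Finset.mem_filter.1 this).2
        have hcard : (X.filter (fun z => prec y z)).card ≤ n :=
          Nat.lt_succ_iff.1 (lt_of_lt_of_le (Finset.card_lt_card hsub) hc)
        obtain ⟨m, hm, hcase⟩ := ih y hyX hcard
        refine ⟨m, hm, Or.inr ?_⟩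
        rcases hcase with rfl | h'
        · exact hxy
        · exact htrans hxy h'
  intro x hx
  exact key _ x hx le_rfl

lemma optF_eq_of {M : Type*} {prec : M → M → Prop} (htrans : Transitive prec)
    {X Y : Finset M} (hYX : Y ⊆ X) (hdom : ∀ x ∈ X, ∃ y ∈ Y, y = x ∨ prec x y) :
    optF prec X = optF prec Y := by
  apply Finset.Subset.antisymm
  · intro x hx
    obtain ⟨hxX, hmax⟩ := mem_optF.1 hx
    obtain ⟨y, hyY, hcase⟩ := hdom x hxX
    rcases hcase with rfl | h'
    · exact mem_optF.2 ⟨hyY, fun z hz => hmax z (hYX hz)⟩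
    · exact absurd h' (hmax y (hYX hyY))
  · intro y hy
    obtain ⟨hyY, _⟩ := mem_optF.1 hy
    refine mem_optF.2 ⟨hYX hyY, fun z hz hp => ?_⟩
    obtain ⟨w, hwY, hcase⟩ := hdom z hz
    rcases hcase with rfl | h'
    · exact (mem_optF.1 hy).2 w hwY hp
    · exact (mem_optF.1 hy).2 w hwY (htrans hp h')

lemma optF_union_left' {M : Type*} [DecidableEq M] {prec : M → M → Prop}
    (htrans : Transitive prec) (hirr : Irreflexive prec) (X Z : Finset M) :
    optF prec (X ∪ Z) = optF prec (optF prec X ∪ Z) := by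
  apply optF_eq_of htrans
  · exact Finset.union_subset_union_left (optF_subset _ _)
  · intro x hx
    rcases Finset.mem_union.1 hx with hx | hx
    · obtain ⟨m, hm, hc⟩ := exists_opt htrans hirr X x hx
      exact ⟨m, Finset.mem_union_left _ hm, hc⟩
    · exact ⟨x, Finset.mem_union_right _ hx, Or.inl rfl⟩

lemma optF_union_right' {M : Type*} [DecidableEq M] {prec : M → M → Prop}
    (htrans : Transitive prec) (hirr : Irreflexive prec) (X Z : Finset M) :
    optF prec (Z ∪ X) = optF prec (Z ∪ optF prec X) := by
  rw [Finset.union_comm Z X, Finset.union_comm Z (optF prec X)]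
  exact optF_union_left' htrans hirr X Z

lemma optF_add_right' {M : Type*} [AddCommMonoid M] [DecidableEq M] {prec : M → M → Prop}
    (htrans : Transitive prec) (hirr : Irreflexive prec)
    (hinv : ∀ a b c : M, prec b c → prec (a + b) (a + c)) (X Z : Finset M) :
    optF prec (Z + X) = optF prec (Z + optF prec X) := by
  apply optF_eq_of htrans
  · exact Finset.add_subset_add_left (optF_subset _ _)
  · intro v hv
    obtain ⟨z, hz, x, hx, rfl⟩ := Finset.mem_add.1 hv
    obtain ⟨m, hm, hc⟩ := exists_opt htrans hirr X x hx
    refine ⟨z + m, Finset.add_mem_add hz hm, ?_⟩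
    rcases hc with rfl | h'
    · exact Or.inl rfl
    · exact Or.inr (hinv z x m h')

lemma optF_add_left' {M : Type*} [AddCommMonoid M] [DecidableEq M] {prec : M → M → Prop}
    (htrans : Transitive prec) (hirr : Irreflexive prec)
    (hinv : ∀ a b c : M, prec b c → prec (a + b) (a + c)) (X Z : Finset M) :
    optF prec (X + Z) = optF prec (optF prec X + Z) := by
  rw [add_comm X Z, add_comm (optF prec X) Z]
  exact optF_add_right' htrans hirr hinv X Z

/-- The finite antichains of an additive commutative monoid `M` equipped with a
transitive, irreflexive, translation-invariant preference `≺` form a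
commutative semiring under `A ⊕ B = opt (A ∪ B)` and `A ⊗ B = opt (A + B)`,
with zero `∅` and one `{0}`. -/
theorem antichain_semiring {M : Type*} [AddCommMonoid M] [DecidableEq M]
    (prec : M → M → Prop) (htrans : Transitive prec) (hirr : Irreflexive prec)
    (hinv : ∀ a b c : M, prec b c → prec (a + b) (a + c)) :
    -- closure under ⊕ and ⊗
    (∀ A B : Finset M, IsAC prec A → IsAC prec B → IsAC prec (acAdd prec A B)) ∧
    (∀ A B : Finset M, IsAC prec A → IsAC prec B → IsAC prec (acMul prec A B)) ∧
    -- ⊕ is associative and commutative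
    (∀ A B C : Finset M, IsAC prec A → IsAC prec B → IsAC prec C →
      acAdd prec (acAdd prec A B) C = acAdd prec A (acAdd prec B C)) ∧
    (∀ A B : Finset M, IsAC prec A → IsAC prec B →
      acAdd prec A B = acAdd prec B A) ∧
    -- ⊗ is associative and commutative
    (∀ A B C : Finset M, IsAC prec A → IsAC prec B → IsAC prec C →
      acMul prec (acMul prec A B) C = acMul prec A (acMul prec B C)) ∧
    (∀ A B : Finset M, IsAC prec A → IsAC prec B →
      acMul prec A B = acMul prec B A) ∧
    -- ∅ is the identity for ⊕ and absorbing for ⊗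
    (∀ A : Finset M, IsAC prec A → acAdd prec A ∅ = A) ∧
    (∀ A : Finset M, IsAC prec A → acMul prec A ∅ = ∅) ∧
    -- {0} is the identity for ⊗
    IsAC prec ({0} : Finset M) ∧
    (∀ A : Finset M, IsAC prec A → acMul prec A {0} = A) ∧
    -- ⊗ distributes over ⊕
    (∀ A B C : Finset M, IsAC prec A → IsAC prec B → IsAC prec C →
      acMul prec A (acAdd prec B C) =
        acAdd prec (acMul prec A B) (acMul prec A C)) := by
  refine ⟨?_, ?_, ?_, ?_, ?_, ?_, ?_, ?_, ?_, ?_, ?_⟩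
  · intro A B _ _
    exact optF_idem prec (A ∪ B)
  · intro A B _ _
    exact optF_idem prec (A + B)
  · intro A B C _ _ _
    unfold acAdd
    rw [← optF_union_left' htrans hirr, ← optF_union_right' htrans hirr,
      Finset.union_assoc]
  · intro A B _ _
    unfold acAdd
    rw [Finset.union_comm]
  · intro A B C _ _ _
    unfold acMul
    rw [← optF_add_left' htrans hirr hinv, ← optF_add_right' htrans hirr hinv,
      add_assoc]
  · intro A B _ _
    unfold acMul
    rw [add_comm]
  · intro A hA
    unfold acAdd
    rw [Finset.union_empty]
    exact hA
  · intro A _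
    unfold acMul
    rw [Finset.add_empty]
    simp [optF]
  · ext x
    simp only [optF, Finset.mem_filter, Finset.mem_singleton]
    refine ⟨fun h => h.1, fun h => ⟨h, fun y hy hp => ?_⟩⟩
    subst h
    subst hy
    exact hirr _ hp
  · intro A hA
    unfold acMul
    have : A + ({0} : Finset M) = A := by
      ext x; simp [Finset.mem_add]
    rw [this]
    exact hA
  · intro A B C _ _ _
    unfold acMul acAdd
    rw [← optF_add_right' htrans hirr hinv, Finset.add_union,
      ← optF_union_left' htrans hirr, ← optF_union_right' htrans hirr]
end
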